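/- Let n be an integer with 9 ≤ n ≤ 11, let b satisfy 0 < b ≤ 1/(5n), and set a = b + (n-2)b²/2, b_max = 1/(2n+2), a_max = b_max(2+(n-2)b_max)²/(2(2+(n-3)b_max)), γ_max = b_max/(2+(n-3)b_max), and ζ = ((1+2(n-1)a)/(1+2(n-1)a_max)) · ((1+(n-2)b_max)/(1+(n-2)b)) · (1+γ_max). Then ζ ≤ 1 and 1 + (n-2)(1-ζ) ≥ 2ζ²·(n²-2n+2)/(n-2)². -/
import Mathlib


/-- `b_max = 1/(2n+2)`. -/
noncomputable def bMax (n : ℕ) : ℝ := 1 / (2 * (n : ℝ) + 2)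

/-- `a_max = b_max(2+(n-2)b_max)² / (2(2+(n-3)b_max))`. -/
noncomputable def aMax (n : ℕ) : ℝ :=
  bMax n * (2 + ((n : ℝ) - 2) * bMax n) ^ 2 / (2 * (2 + ((n : ℝ) - 3) * bMax n))

/-- `γ_max = b_max/(2+(n-3)b_max)`. -/
noncomputable def gammaMax (n : ℕ) : ℝ :=
  bMax n / (2 + ((n : ℝ) - 3) * bMax n)

lemma zeta_div_helper {A c d D e k : ℝ} (hc : 0 < c) (hD : 0 < D)
    (h : A * d * e ≤ k * (c * D)) : A / c * (d / D) * e ≤ k := by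
  rw [show A / c * (d / D) * e = A * d * e / (c * D) by ring]
  exact (div_le_iff₀ (by positivity)).mpr h

/-- for `9 ≤ n ≤ 11`, `0 < b ≤ 1/(5n)`, `a = b + (n-2)b²/2` and
`ζ = ((1+2(n-1)a)/(1+2(n-1)a_max))·((1+(n-2)b_max)/(1+(n-2)b))·(1+γ_max)`,
one has `ζ ≤ 1` and `1 + (n-2)(1-ζ) ≥ 2ζ²(n²-2n+2)/(n-2)²`. -/
theorem stmt_11 (n : ℕ) (hn9 : 9 ≤ n) (hn11 : n ≤ 11) (b : ℝ)
    (hb0 : 0 < b) (hb : b ≤ 1 / (5 * (n : ℝ)))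
    (a ζ : ℝ) (ha : a = b + ((n : ℝ) - 2) * b ^ 2 / 2)
    (hζ : ζ = (1 + 2 * ((n : ℝ) - 1) * a) / (1 + 2 * ((n : ℝ) - 1) * aMax n) *
      ((1 + ((n : ℝ) - 2) * bMax n) / (1 + ((n : ℝ) - 2) * b)) * (1 + gammaMax n)) :
    ζ ≤ 1 ∧
      1 + ((n : ℝ) - 2) * (1 - ζ) ≥
        2 * ζ ^ 2 * ((n : ℝ) ^ 2 - 2 * n + 2) / ((n : ℝ) - 2) ^ 2 := by
  subst ha
  have hden : (0:ℝ) < 1 + ((n : ℝ) - 2) * b := by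
    have : (2:ℝ) ≤ (n:ℝ) := by exact_mod_cast le_trans (by norm_num) hn9
    nlinarith
  interval_cases n <;>
  · simp only [bMax, aMax, gammaMax] at hζ
    norm_num at hζ hb hden ⊢
    have hz0 : 0 ≤ ζ := by rw [hζ]; positivity
    have hz : ζ ≤ 17/20 := by
      rw [hζ]
      refine zeta_div_helper (by norm_num) hden ?_
      nlinarith [mul_nonneg (sub_nonneg.mpr hb) hb0.le, sq_nonneg b, hb0.le]
    refine ⟨by linarith, ?_⟩
    nlinarith [mul_nonneg hz0 (by linarith : (0:ℝ) ≤ 17/20 - ζ)]
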